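/- arXiv:1206.5637 — 6 statements merged into one kernel-verified Lean document; each statement's English description precedes it below -/
import Mathlib

section
/- Fix the shared-seed coordinated sampling setup. For every ρ ∈ (0,1], every v ∈ V, and every z ∈ V*(ρ,v), there exists ε > 0 such that z ∈ V*(x,v) for all x ∈ (ρ−ε, 1]. -/
open MeasureTheory Set Filter Topology

noncomputable section

/-- A shared-seed coordinated sampling scheme on a data domain `V ⊆ ℝ_{≥0}^r`:
continuous non-decreasing seed-to-threshold maps `τ i : [0,1] → ℝ` whose range
infimum is at most the infimum of the `i`-th coordinate over the domain. -/
structure CoordScheme (r : ℕ) where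
  V : Set (Fin r → ℝ)
  τ : Fin r → ℝ → ℝ
  V_nonneg : ∀ v ∈ V, ∀ i, 0 ≤ v i
  τ_cont : ∀ i, ContinuousOn (τ i) (Set.Icc 0 1)
  τ_mono : ∀ i, MonotoneOn (τ i) (Set.Icc 0 1)
  τ_inf : ∀ i, sInf (τ i '' Set.Icc 0 1) ≤ sInf ((fun v => v i) '' V)

namespace CoordScheme

variable {r : ℕ}

/-- The set `S(u,v)` of sampled entries: `i` is sampled iff `v i ≥ τ i u`. -/
def sampled (C : CoordScheme r) (u : ℝ) (v : Fin r → ℝ) : Set (Fin r) :=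
  {i | C.τ i u ≤ v i}

/-- The consistent set `V*(u,v)` of data vectors consistent with the outcome `S(u,v)`. -/
def Vstar (C : CoordScheme r) (u : ℝ) (v : Fin r → ℝ) : Set (Fin r → ℝ) :=
  {z ∈ C.V | ∀ i, (C.τ i u ≤ v i → z i = v i) ∧ (v i < C.τ i u → z i < C.τ i u)}

/-- The lower bound function `f̲(u,v) = inf { f z : z ∈ V*(u,v) }`. -/
def lb (C : CoordScheme r) (f : (Fin r → ℝ) → ℝ) (u : ℝ) (v : Fin r → ℝ) : ℝ :=
  sInf (f '' C.Vstar u v)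

/-- An estimator: an integrable function of the outcome (it takes equal values on
data vectors consistent with the same outcome). -/
structure IsEstimator (C : CoordScheme r) (fhat : ℝ → (Fin r → ℝ) → ℝ) : Prop where
  integrable : ∀ v ∈ C.V, IntegrableOn (fun u => fhat u v) (Set.Ioc (0:ℝ) 1)
  consistent : ∀ u ∈ Set.Ioc (0:ℝ) 1, ∀ v ∈ C.V, ∀ z ∈ C.Vstar u v, fhat u v = fhat u z

/-- A nonnegative estimator. -/
def Nonneg (C : CoordScheme r) (fhat : ℝ → (Fin r → ℝ) → ℝ) : Prop :=
  ∀ u ∈ Set.Ioc (0:ℝ) 1, ∀ v ∈ C.V, 0 ≤ fhat u v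

/-- An unbiased estimator of `f`. -/
def Unbiased (C : CoordScheme r) (f : (Fin r → ℝ) → ℝ)
    (fhat : ℝ → (Fin r → ℝ) → ℝ) : Prop :=
  ∀ v ∈ C.V, (∫ u in Set.Ioc (0:ℝ) 1, fhat u v) = f v

end CoordScheme

/-- Lower convex hull of `g` on `(0,1]`: the pointwise largest convex function
bounded above by `g` there. -/
def lowerHull (g : ℝ → ℝ) (u : ℝ) : ℝ :=
  sSup {y : ℝ | ∃ h : ℝ → ℝ, ConvexOn ℝ (Set.Ioc (0:ℝ) 1) h ∧
      (∀ x ∈ Set.Ioc (0:ℝ) 1, h x ≤ g x) ∧ y = h u}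

namespace CoordScheme

variable {r : ℕ}

/-- The `v`-optimal estimates: the negated derivative of the lower hull of the
lower-bound function `u ↦ f̲(u,v)`. -/
def optEst (C : CoordScheme r) (f : (Fin r → ℝ) → ℝ) (v : Fin r → ℝ) (u : ℝ) : ℝ :=
  -deriv (lowerHull (fun x => C.lb f x v)) u

/-- Cumulative integral `∫_{2^{-j}}^1` of the J estimator (by its defining recursion):
`Jint (j+1) = Jint j + (value on `(2^{-j-1},2^{-j}]`) ⬝ 2^{-j-1}`. -/
def Jint (C : CoordScheme r) (f : (Fin r → ℝ) → ℝ) (v : Fin r → ℝ) : ℕ → ℝ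
  | 0 => 0
  | (j+1) => Jint C f v j +
      ((2:ℝ) ^ (j+1) * (C.lb f ((2:ℝ) ^ (-(j:ℤ))) v - Jint C f v j)) * (2:ℝ) ^ (-(j:ℤ) - 1)

/-- The (constant) value of the J estimator on the dyadic interval `(2^{-j-1}, 2^{-j}]`.
For `j = 0` this is `2 ⬝ f̲(1,v)`; for `j ≥ 1` it is
`2^{j+1} ⬝ ( f̲(2^{-j},v) − ∫_{2^{-j}}^1 f̂⁽ᴶ⁾(x,v) dx )`. -/
def Jval (C : CoordScheme r) (f : (Fin r → ℝ) → ℝ) (v : Fin r → ℝ) (j : ℕ) : ℝ :=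
  (2:ℝ) ^ (j+1) * (C.lb f ((2:ℝ) ^ (-(j:ℤ))) v - Jint C f v j)

/-- The J estimator `f̂⁽ᴶ⁾(u,v)`: on `u ∈ (2^{-j-1}, 2^{-j}]` it takes the value `Jval j`. -/
def Jest (C : CoordScheme r) (f : (Fin r → ℝ) → ℝ) (u : ℝ) (v : Fin r → ℝ) : ℝ :=
  C.Jval f v ⌊-Real.logb 2 u⌋₊

end CoordScheme

/-- if `z` is consistent with the outcome at seed `ρ`, it stays
consistent with all outcomes at seeds in some interval `(ρ−ε, 1]`. -/
theorem stmt1 {r : ℕ} (C : CoordScheme r) (ρ : ℝ) (hρ : ρ ∈ Set.Ioc (0:ℝ) 1)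
    (v : Fin r → ℝ) (hv : v ∈ C.V) (z : Fin r → ℝ) (hz : z ∈ C.Vstar ρ v) :
    ∃ ε > 0, ∀ x ∈ Set.Ioc (ρ - ε) 1, z ∈ C.Vstar x v := by
  obtain ⟨hρ0, hρ1⟩ := hρ
  obtain ⟨hzV, hzc⟩ := hz
  have hρIcc : ρ ∈ Set.Icc (0:ℝ) 1 := ⟨le_of_lt hρ0, hρ1⟩
  have hT : {x : ℝ | ∀ i, v i < C.τ i ρ → v i < C.τ i x ∧ z i < C.τ i x}
      ∈ 𝓝[Set.Icc (0:ℝ) 1] ρ := by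
    show ∀ᶠ x in 𝓝[Set.Icc (0:ℝ) 1] ρ, ∀ i, v i < C.τ i ρ → v i < C.τ i x ∧ z i < C.τ i x
    rw [Filter.eventually_all]
    intro i
    by_cases h : v i < C.τ i ρ
    · have hc : Filter.Tendsto (C.τ i) (𝓝[Set.Icc (0:ℝ) 1] ρ) (𝓝 (C.τ i ρ)) :=
        C.τ_cont i ρ hρIcc
      have hzlt : z i < C.τ i ρ := (hzc i).2 h
      have h1 : ∀ᶠ x in 𝓝[Set.Icc (0:ℝ) 1] ρ, v i < C.τ i x :=
        hc.eventually (eventually_gt_nhds h)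
      have h2 : ∀ᶠ x in 𝓝[Set.Icc (0:ℝ) 1] ρ, z i < C.τ i x :=
        hc.eventually (eventually_gt_nhds hzlt)
      filter_upwards [h1, h2] with x hx1 hx2 _
      exact ⟨hx1, hx2⟩
    · filter_upwards with x hx
      exact absurd hx h
  rw [Metric.mem_nhdsWithin_iff] at hT
  obtain ⟨δ, hδ0, hδ⟩ := hT
  refine ⟨min δ ρ, lt_min hδ0 hρ0, ?_⟩
  rintro x ⟨hx1, hx2⟩
  have hx0 : 0 < x := lt_of_le_of_lt (by simp) hx1
  have hxIcc : x ∈ Set.Icc (0:ℝ) 1 := ⟨le_of_lt hx0, hx2⟩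
  refine ⟨hzV, fun i => ?_⟩
  rcases le_or_gt ρ x with hle | hlt
  · have hmono : C.τ i ρ ≤ C.τ i x := C.τ_mono i hρIcc hxIcc hle
    constructor
    · intro hvx
      exact (hzc i).1 (le_trans hmono hvx)
    · intro hvx
      rcases le_or_gt (C.τ i ρ) (v i) with h | h
      · rw [(hzc i).1 h]; exact hvx
      · exact lt_of_lt_of_le ((hzc i).2 h) hmono
  · have hxT : x ∈ {x : ℝ | ∀ i, v i < C.τ i ρ → v i < C.τ i x ∧ z i < C.τ i x} := by
      apply hδ
      constructor
      · rw [Metric.mem_ball, Real.dist_eq, abs_of_nonpos (by linarith)]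
        have : ρ - x < min δ ρ := by linarith
        calc -(x - ρ) = ρ - x := by ring
          _ < min δ ρ := this
          _ ≤ δ := min_le_left _ _
      · exact hxIcc
    constructor
    · intro hvx
      rcases le_or_gt (C.τ i ρ) (v i) with h | h
      · exact (hzc i).1 h
      · exact absurd hvx (not_le.mpr (hxT i h).1)
    · intro hvx
      rcases le_or_gt (C.τ i ρ) (v i) with h | h
      · rw [(hzc i).1 h]; exact hvx
      · exact (hxT i h).2
end
end

section
/- Fix the shared-seed coordinated sampling setup and a function f : V → ℝ_{≥0}. For every v ∈ V, the lower bound function u ↦ f̲^{(v)}(u) is left-continuous on (0,1]: for every ρ ∈ (0,1], lim_{η→ρ⁻} f̲^{(v)}(η) = f̲^{(v)}(ρ). -/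
open MeasureTheory Set Filter Topology

noncomputable section

/-!
As `η` increases to `ρ`, the thresholds `τ i η` increase to `τ i ρ`, so every strict inequality
`w i < τ i ρ` already holds at `τ i η` for `η` close to `ρ`. Hence, eventually, `V*(η,v)` is
contained in `V*(ρ,v)`, and each fixed `z ∈ V*(ρ,v)` lies in `V*(η,v)`. An infimum over sets
that shrink into `T` while eventually catching every point of `T` converges to the infimum
over `T`.
-/

theorem tendsto_csInf_image_of_eventually_subset {ι α β : Type*}
    [ConditionallyCompleteLinearOrder β] [TopologicalSpace β] [OrderTopology β]
    {l : Filter ι} {S : ι → Set α} {T : Set α} {g : α → β}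
    (hT : T.Nonempty) (hbdd : BddBelow (g '' T))
    (hsub : ∀ᶠ i in l, S i ⊆ T) (hmem : ∀ z ∈ T, ∀ᶠ i in l, z ∈ S i) :
    Tendsto (fun i => sInf (g '' S i)) l (𝓝 (sInf (g '' T))) := by
  rw [tendsto_order]
  constructor
  · intro a ha
    obtain ⟨z, hz⟩ := hT
    filter_upwards [hsub, hmem z hz] with i hi hzi
    exact ha.trans_le (csInf_le_csInf hbdd ⟨g z, z, hzi, rfl⟩ (image_mono hi))
  · intro a ha
    obtain ⟨_, ⟨z, hz, rfl⟩, hza⟩ := exists_lt_of_csInf_lt (hT.image g) ha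
    filter_upwards [hsub, hmem z hz] with i hi hzi
    exact (csInf_le (hbdd.mono (image_mono hi)) ⟨z, hzi, rfl⟩).trans_lt hza

namespace CoordScheme

variable {r : ℕ} (C : CoordScheme r)

theorem self_mem_Vstar {v : Fin r → ℝ} (hv : v ∈ C.V) (u : ℝ) : v ∈ C.Vstar u v :=
  ⟨hv, fun _ => ⟨fun _ => rfl, id⟩⟩

theorem bddBelow_image_Vstar {f : (Fin r → ℝ) → ℝ} (hf : ∀ v ∈ C.V, 0 ≤ f v)
    (u : ℝ) (v : Fin r → ℝ) : BddBelow (f '' C.Vstar u v) :=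
  ⟨0, by rintro _ ⟨z, hz, rfl⟩; exact hf z hz.1⟩

theorem Vstar_subset_Vstar {η ρ : ℝ} {v : Fin r → ℝ} (hτ : ∀ i, C.τ i η ≤ C.τ i ρ)
    (hv : ∀ i, v i < C.τ i ρ → v i < C.τ i η) : C.Vstar η v ⊆ C.Vstar ρ v := by
  rintro z ⟨hzV, hz⟩
  exact ⟨hzV, fun i => ⟨fun h => (hz i).1 ((hτ i).trans h),
    fun h => ((hz i).2 (hv i h)).trans_le (hτ i)⟩⟩

theorem mem_Vstar_of_mem_Vstar {η ρ : ℝ} {v z : Fin r → ℝ} (hz : z ∈ C.Vstar ρ v)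
    (hv : ∀ i, v i < C.τ i ρ → v i < C.τ i η) (hzτ : ∀ i, z i < C.τ i ρ → z i < C.τ i η) :
    z ∈ C.Vstar η v := by
  refine ⟨hz.1, fun i => ⟨fun h => ?_, fun h => ?_⟩⟩
  · rcases le_or_gt (C.τ i ρ) (v i) with hρ | hρ
    · exact (hz.2 i).1 hρ
    · exact absurd h (hv i hρ).not_ge
  · rcases le_or_gt (C.τ i ρ) (v i) with hρ | hρ
    · exact (hz.2 i).1 hρ ▸ h
    · exact hzτ i ((hz.2 i).2 hρ)

theorem eventually_tau_le {ρ : ℝ} (hρ : ρ ∈ Ioc (0 : ℝ) 1) :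
    ∀ᶠ η in 𝓝[<] ρ, ∀ i, C.τ i η ≤ C.τ i ρ := by
  filter_upwards [Icc_mem_nhdsLT_of_mem hρ, self_mem_nhdsWithin] with η hη hηρ i
  exact C.τ_mono i hη (Ioc_subset_Icc_self hρ) (le_of_lt hηρ)

theorem eventually_lt_tau {ρ : ℝ} (hρ : ρ ∈ Ioc (0 : ℝ) 1) (w : Fin r → ℝ) :
    ∀ᶠ η in 𝓝[<] ρ, ∀ i, w i < C.τ i ρ → w i < C.τ i η := by
  rw [eventually_all]
  intro i
  by_cases hw : w i < C.τ i ρ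
  · have hτ : Tendsto (C.τ i) (𝓝[<] ρ) (𝓝 (C.τ i ρ)) :=
      (C.τ_cont i ρ (Ioc_subset_Icc_self hρ)).tendsto.mono_left
        (nhdsWithin_le_iff.2 (Icc_mem_nhdsLT_of_mem hρ))
    filter_upwards [hτ.eventually (eventually_gt_nhds hw)] with η hη _ using hη
  · exact Eventually.of_forall fun _ h => absurd h hw

end CoordScheme

/-- the lower bound function `u ↦ f̲⁽ᵛ⁾(u)` is left-continuous on `(0,1]`. -/
theorem stmt2 {r : ℕ} (C : CoordScheme r) (f : (Fin r → ℝ) → ℝ)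
    (hf : ∀ v ∈ C.V, 0 ≤ f v) (v : Fin r → ℝ) (hv : v ∈ C.V)
    (ρ : ℝ) (hρ : ρ ∈ Set.Ioc (0:ℝ) 1) :
    Filter.Tendsto (fun η => C.lb f η v) (𝓝[<] ρ) (𝓝 (C.lb f ρ v)) := by
  refine tendsto_csInf_image_of_eventually_subset ⟨v, C.self_mem_Vstar hv ρ⟩
    (C.bddBelow_image_Vstar hf ρ v) ?_ fun z hz => ?_
  · filter_upwards [C.eventually_tau_le hρ, C.eventually_lt_tau hρ v] with η hτ hvτ
    exact C.Vstar_subset_Vstar hτ hvτ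
  · filter_upwards [C.eventually_lt_tau hρ v, C.eventually_lt_tau hρ z] with η hvτ hzτ
    exact C.mem_Vstar_of_mem_Vstar hz hvτ hzτ
end
end

section
/- Fix the shared-seed coordinated sampling setup and a function f : V → ℝ_{≥0}. Every nonnegative unbiased estimator f̂ of f satisfies: for every v ∈ V and every ρ ∈ (0,1], ∫_ρ^1 f̂(u,v) du ≤ f̲^{(v)}(ρ). -/
open MeasureTheory Set Filter Topology

noncomputable section

/-- every nonnegative unbiased estimator satisfies
`∫_ρ^1 f̂(u,v) du ≤ f̲⁽ᵛ⁾(ρ)` for all `v ∈ V` and `ρ ∈ (0,1]`. -/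
theorem stmt3 {r : ℕ} (C : CoordScheme r) (f : (Fin r → ℝ) → ℝ)
    (hf : ∀ v ∈ C.V, 0 ≤ f v) (fhat : ℝ → (Fin r → ℝ) → ℝ)
    (hEst : C.IsEstimator fhat) (hNN : C.Nonneg fhat) (hUB : C.Unbiased f fhat) :
    ∀ v ∈ C.V, ∀ ρ ∈ Set.Ioc (0:ℝ) 1,
      (∫ u in Set.Ioc ρ 1, fhat u v) ≤ C.lb f ρ v := by
  intro v hv ρ hρ
  refine le_csInf ⟨f v, ⟨v, ⟨hv, fun i => ⟨fun _ => rfl, fun h => h⟩⟩, rfl⟩⟩ ?_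
  rintro b ⟨z, ⟨hzV, hzc⟩, rfl⟩
  have hsub : Set.Ioc ρ 1 ⊆ Set.Ioc (0:ℝ) 1 := Set.Ioc_subset_Ioc_left hρ.1.le
  have hcong : ∀ u ∈ Set.Ioc ρ 1, fhat u v = fhat u z := by
    intro u hu
    have hu' : u ∈ Set.Ioc (0:ℝ) 1 := hsub hu
    refine hEst.consistent u hu' v hv z ⟨hzV, fun i => ?_⟩
    have hmono : C.τ i ρ ≤ C.τ i u :=
      C.τ_mono i ⟨hρ.1.le, hρ.2⟩ ⟨hu'.1.le, hu'.2⟩ hu.1.le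
    refine ⟨fun h => (hzc i).1 (le_trans hmono h), fun h => ?_⟩
    rcases lt_or_ge (v i) (C.τ i ρ) with h' | h'
    · exact lt_of_lt_of_le ((hzc i).2 h') hmono
    · rw [(hzc i).1 h']; exact h
  calc ∫ u in Set.Ioc ρ 1, fhat u v
      = ∫ u in Set.Ioc ρ 1, fhat u z :=
        setIntegral_congr_fun measurableSet_Ioc hcong
    _ ≤ ∫ u in Set.Ioc (0:ℝ) 1, fhat u z := by
        refine setIntegral_mono_set (hEst.integrable z hzV) ?_
          (HasSubset.Subset.eventuallyLE hsub)
        exact (ae_restrict_iff' measurableSet_Ioc).2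
          (Filter.Eventually.of_forall (fun u hu => hNN u hu z hzV))
    _ = f z := hUB z hzV
end
end

section
/- Fix the shared-seed coordinated sampling setup and a function f : V → ℝ_{≥0}. The J estimator is well defined, i.e. consistent across data vectors: for every j ≥ 0, every v ∈ V, every z ∈ V*(2^{−j}, v), and every u ∈ (2^{−j−1}, 2^{−j}], the J estimate satisfies f̂^{(J)}(u,v) = f̂^{(J)}(u,z). -/
open MeasureTheory Set Filter Topology

noncomputable section

/-- the J estimator is well defined (consistent across data vectors):
for every `j`, every `z` consistent with the outcome of `v` at seed `2^{-j}`, and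
every `u ∈ (2^{-j-1}, 2^{-j}]`, the J estimates on `v` and `z` agree. -/
theorem stmt9 {r : ℕ} (C : CoordScheme r) (f : (Fin r → ℝ) → ℝ)
    (hf : ∀ v ∈ C.V, 0 ≤ f v) (j : ℕ) (v : Fin r → ℝ) (hv : v ∈ C.V)
    (z : Fin r → ℝ) (hz : z ∈ C.Vstar ((2:ℝ) ^ (-(j:ℤ))) v)
    (u : ℝ) (hu : u ∈ Set.Ioc ((2:ℝ) ^ (-(j:ℤ) - 1)) ((2:ℝ) ^ (-(j:ℤ)))) :
    C.Jest f u v = C.Jest f u z := by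
  obtain ⟨hzV, hzc⟩ := hz
  have hmem : ∀ m : ℕ, (2:ℝ)^(-(m:ℤ)) ∈ Set.Icc (0:ℝ) 1 := by
    intro m
    constructor
    · positivity
    · apply zpow_le_one_of_nonpos₀ (by norm_num)
      simp
  -- Vstar equality for all k ≤ j
  have hVstar : ∀ k : ℕ, k ≤ j →
      C.Vstar ((2:ℝ)^(-(k:ℤ))) v = C.Vstar ((2:ℝ)^(-(k:ℤ))) z := by
    intro k hk
    have hle : (2:ℝ)^(-(j:ℤ)) ≤ (2:ℝ)^(-(k:ℤ)) := by
      apply zpow_le_zpow_right₀ (by norm_num)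
      omega
    have key : ∀ i, (z i = v i) ∨
        (v i < C.τ i ((2:ℝ)^(-(k:ℤ))) ∧ z i < C.τ i ((2:ℝ)^(-(k:ℤ)))) := by
      intro i
      have hτ : C.τ i ((2:ℝ)^(-(j:ℤ))) ≤ C.τ i ((2:ℝ)^(-(k:ℤ))) :=
        C.τ_mono i (hmem j) (hmem k) hle
      by_cases h : C.τ i ((2:ℝ)^(-(j:ℤ))) ≤ v i
      · exact Or.inl ((hzc i).1 h)
      · push_neg at h
        exact Or.inr ⟨lt_of_lt_of_le h hτ, lt_of_lt_of_le ((hzc i).2 h) hτ⟩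
    ext w
    simp only [CoordScheme.Vstar, Set.mem_setOf_eq]
    constructor <;> rintro ⟨hwV, hw⟩ <;> refine ⟨hwV, fun i => ?_⟩ <;>
      rcases key i with h | ⟨h1, h2⟩
    · rw [h]; exact hw i
    · exact ⟨fun hc => absurd hc (not_le.2 h2), fun _ => (hw i).2 h1⟩
    · rw [← h]; exact hw i
    · exact ⟨fun hc => absurd hc (not_le.2 h1), fun _ => (hw i).2 h2⟩
  have hlb : ∀ k : ℕ, k ≤ j →
      C.lb f ((2:ℝ)^(-(k:ℤ))) v = C.lb f ((2:ℝ)^(-(k:ℤ))) z := by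
    intro k hk
    unfold CoordScheme.lb
    rw [hVstar k hk]
  have hJint : ∀ n : ℕ, n ≤ j → CoordScheme.Jint C f v n = CoordScheme.Jint C f z n := by
    intro n
    induction n with
    | zero => intro _; rfl
    | succ m ih =>
      intro hm
      have h1 := ih (by omega)
      have h2 := hlb m (by omega)
      simp only [CoordScheme.Jint, h1, h2]
  have hJval : CoordScheme.Jval C f v j = CoordScheme.Jval C f z j := by
    unfold CoordScheme.Jval
    rw [hJint j le_rfl, hlb j le_rfl]
  -- the floor is j
  have hu1 : (2:ℝ)^(-(j:ℤ)-1) < u := hu.1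
  have hu2 : u ≤ (2:ℝ)^(-(j:ℤ)) := hu.2
  have hupos : 0 < u := lt_trans (by positivity) hu1
  have hlogb : ∀ n : ℤ, Real.logb 2 ((2:ℝ)^n) = n := by
    intro n
    rw [Real.logb, Real.log_zpow]
    field_simp
  have hA : Real.logb 2 u ≤ -(j:ℝ) := by
    have h := Real.logb_le_logb_of_le (b := 2) (by norm_num : (1:ℝ) < 2) hupos hu2
    rw [hlogb] at h
    push_cast at h
    exact h
  have hB : -(j:ℝ) - 1 < Real.logb 2 u := by
    have h := Real.logb_lt_logb (b := 2) (by norm_num : (1:ℝ) < 2) (by positivity) hu1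
    rw [hlogb] at h
    push_cast at h
    linarith
  have hfloor : ⌊-Real.logb 2 u⌋₊ = j := by
    rw [Nat.floor_eq_iff (by linarith [(Nat.cast_nonneg j : (0:ℝ) ≤ j)])]
    constructor
    · linarith
    · push_cast
      linarith
  unfold CoordScheme.Jest
  rw [hfloor, hJval]
end
end

section
/- Fix the shared-seed coordinated sampling setup and a function f : V → ℝ_{≥0}. The J estimator satisfies the invariant: for every v ∈ V and every integer j ≥ 1, f̲(2^{−j+1}, v) = ∫_{2^{−j}}^1 f̂^{(J)}(u,v) du. -/
open MeasureTheory Set Filter Topology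

noncomputable section

/-! The J estimator is constant on each dyadic interval `(2^{-j-1}, 2^{-j}]`, so its integral
over `(2^{-j}, 1]` is the partial sum `Jint j` of its values times the interval lengths. The value
on `(2^{-j-1}, 2^{-j}]` is `2^{j+1}` times the gap `f̲(2^{-j}) - Jint j`, and that interval has
length `2^{-j-1}`, so adding it closes the gap exactly. -/

theorem Nat.floor_neg_logb_eq_of_mem_Ioc {b u : ℝ} (hb : 1 < b) (j : ℕ)
    (hu : u ∈ Ioc (b ^ (-(j:ℤ) - 1)) (b ^ (-(j:ℤ)))) : ⌊-Real.logb b u⌋₊ = j := by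
  obtain ⟨hlo, hhi⟩ := hu
  have hu_pos : 0 < u := (zpow_pos (by linarith) _).trans hlo
  have hu_le_one : u ≤ 1 := hhi.trans (zpow_le_one_of_nonpos₀ hb.le (by simp))
  rw [Nat.floor_eq_iff (neg_nonneg.mpr (Real.logb_nonpos hb hu_pos.le hu_le_one)),
    le_neg, neg_lt, Real.logb_le_iff_le_rpow hb hu_pos, Real.lt_logb_iff_rpow_lt hb hu_pos]
  constructor
  · simpa [← Real.rpow_intCast] using hhi
  · calc b ^ (-((j:ℝ) + 1)) = b ^ (-(j:ℤ) - 1) := by rw [← Real.rpow_intCast]; push_cast; ring_nf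
      _ < u := hlo

theorem Ioc_two_zpow_succ_eq_union (j : ℕ) :
    Ioc ((2:ℝ) ^ (-((j + 1 : ℕ) : ℤ))) 1 =
      Ioc ((2:ℝ) ^ (-(j:ℤ) - 1)) (2 ^ (-(j:ℤ))) ∪ Ioc (2 ^ (-(j:ℤ))) 1 := by
  rw [Ioc_union_Ioc_eq_Ioc (zpow_le_zpow_right₀ one_le_two (by omega))
    (zpow_le_one_of_nonpos₀ one_le_two (by simp))]
  push_cast
  ring_nf

namespace CoordScheme

variable {r : ℕ} (C : CoordScheme r) (f : (Fin r → ℝ) → ℝ) (v : Fin r → ℝ)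

theorem Jest_eq_Jval_of_mem_Ioc (j : ℕ) {u : ℝ}
    (hu : u ∈ Ioc ((2:ℝ) ^ (-(j:ℤ) - 1)) (2 ^ (-(j:ℤ)))) : C.Jest f u v = C.Jval f v j := by
  rw [Jest, Nat.floor_neg_logb_eq_of_mem_Ioc one_lt_two j hu]

theorem integrableOn_Jest_dyadic (j : ℕ) :
    IntegrableOn (fun u => C.Jest f u v) (Ioc ((2:ℝ) ^ (-(j:ℤ) - 1)) (2 ^ (-(j:ℤ)))) :=
  (integrableOn_const measure_Ioc_lt_top.ne).congr_fun
    (fun _ hu => (C.Jest_eq_Jval_of_mem_Ioc f v j hu).symm) measurableSet_Ioc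

theorem integral_Jest_dyadic (j : ℕ) :
    ∫ u in Ioc ((2:ℝ) ^ (-(j:ℤ) - 1)) (2 ^ (-(j:ℤ))), C.Jest f u v =
      C.Jval f v j * 2 ^ (-(j:ℤ) - 1) := by
  have hlen : (2:ℝ) ^ (-(j:ℤ)) - 2 ^ (-(j:ℤ) - 1) = 2 ^ (-(j:ℤ) - 1) := by
    rw [zpow_sub_one₀ two_ne_zero]
    ring
  rw [setIntegral_congr_fun measurableSet_Ioc (fun _ hu => C.Jest_eq_Jval_of_mem_Ioc f v j hu),
    setIntegral_const, Real.volume_real_Ioc_of_le (zpow_le_zpow_right₀ one_le_two (by omega)),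
    hlen, smul_eq_mul, mul_comm]

theorem integrableOn_Jest (j : ℕ) :
    IntegrableOn (fun u => C.Jest f u v) (Ioc ((2:ℝ) ^ (-(j:ℤ))) 1) := by
  induction j with
  | zero => simp
  | succ j ih =>
    rw [Ioc_two_zpow_succ_eq_union]
    exact (C.integrableOn_Jest_dyadic f v j).union ih

theorem integral_Jest_eq_Jint (j : ℕ) :
    ∫ u in Ioc ((2:ℝ) ^ (-(j:ℤ))) 1, C.Jest f u v = C.Jint f v j := by
  induction j with
  | zero => simp [Jint]
  | succ j ih =>
    rw [Ioc_two_zpow_succ_eq_union, setIntegral_union (Ioc_disjoint_Ioc_of_le le_rfl)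
      measurableSet_Ioc (C.integrableOn_Jest_dyadic f v j) (C.integrableOn_Jest f v j),
      integral_Jest_dyadic, ih, Jint, Jval]
    ring

theorem Jint_succ (j : ℕ) : C.Jint f v (j + 1) = C.lb f ((2:ℝ) ^ (-(j:ℤ))) v := by
  have hpow : (2:ℝ) ^ (j + 1) * 2 ^ (-(j:ℤ) - 1) = 1 := by
    rw [← zpow_natCast, ← zpow_add₀ two_ne_zero]
    push_cast
    simp
  rw [Jint, mul_right_comm, hpow, one_mul]
  ring

end CoordScheme

theorem stmt10_general {r : ℕ} (C : CoordScheme r) (f : (Fin r → ℝ) → ℝ) :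
    ∀ v ∈ C.V, ∀ j : ℕ, 1 ≤ j →
      C.lb f ((2:ℝ) ^ (-(j:ℤ) + 1)) v =
        ∫ u in Set.Ioc ((2:ℝ) ^ (-(j:ℤ))) 1, C.Jest f u v := by
  intro v _ j hj
  obtain ⟨k, rfl⟩ := Nat.exists_eq_add_of_le' hj
  rw [C.integral_Jest_eq_Jint, C.Jint_succ]
  push_cast
  ring_nf

/-- the J estimator invariant: for every `v ∈ V` and every `j ≥ 1`,
`f̲(2^{−j+1}, v) = ∫_{2^{−j}}^1 f̂⁽ᴶ⁾(u,v) du`. -/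
theorem stmt10 {r : ℕ} (C : CoordScheme r) (f : (Fin r → ℝ) → ℝ)
    (hf : ∀ v ∈ C.V, 0 ≤ f v) :
    ∀ v ∈ C.V, ∀ j : ℕ, 1 ≤ j →
      C.lb f ((2:ℝ) ^ (-(j:ℤ) + 1)) v =
        ∫ u in Set.Ioc ((2:ℝ) ^ (-(j:ℤ))) 1, C.Jest f u v :=
  stmt10_general C f
end
end

section
/- Fix the shared-seed coordinated sampling setup and a function f : V → ℝ_{≥0} satisfying lim_{u→0⁺} f̲^{(v)}(u) = f(v) for every v ∈ V. Then every partially specified estimator can be extended to a nonnegative unbiased estimator of f. That is, if f̂ is nonnegative and defined on a set of outcomes closed under the containment order of consistent sets (for every v there is ρ_v ∈ [0,1] with f̂(u,v) defined for a.e. u > ρ_v and undefined for a.e. u ≤ ρ_v) and satisfies ∫_{ρ_v}^1 f̂(u,v) du ≤ f(v) whenever ρ_v > 0 and ∫_0^1 f̂(u,v) du = f(v) whenever ρ_v = 0, then there is a nonnegative unbiased estimator of f agreeing with f̂ wherever f̂ is defined. -/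
open MeasureTheory Set Filter Topology

noncomputable section

/-- A partially specified (nonnegative) estimator: values `est u v` are specified
exactly on outcomes with seed `u > bnd v`, the set of specified outcomes is closed
under the containment order (well defined per outcome), the specified values are
nonnegative, consistent across data vectors with the same outcome, integrable, and
satisfy `∫_{ρ_v}^1 est ≤ f v` when `ρ_v > 0` and `∫_0^1 est = f v` when `ρ_v = 0`. -/
structure PartialSpec {r : ℕ} (C : CoordScheme r) (f : (Fin r → ℝ) → ℝ) where
  est : ℝ → (Fin r → ℝ) → ℝ
  bnd : (Fin r → ℝ) → ℝ
  bnd_mem : ∀ v ∈ C.V, bnd v ∈ Set.Icc (0:ℝ) 1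
  closed : ∀ u ∈ Set.Ioc (0:ℝ) 1, ∀ v ∈ C.V, ∀ z ∈ C.Vstar u v, (bnd v < u ↔ bnd z < u)
  consistent : ∀ u ∈ Set.Ioc (0:ℝ) 1, ∀ v ∈ C.V, ∀ z ∈ C.Vstar u v, bnd v < u →
    est u v = est u z
  nonneg : ∀ u ∈ Set.Ioc (0:ℝ) 1, ∀ v ∈ C.V, bnd v < u → 0 ≤ est u v
  integrable : ∀ v ∈ C.V, IntegrableOn (fun u => est u v) (Set.Ioc (bnd v) 1)
  int_le : ∀ v ∈ C.V, 0 < bnd v → (∫ u in Set.Ioc (bnd v) 1, est u v) ≤ f v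
  int_eq : ∀ v ∈ C.V, bnd v = 0 → (∫ u in Set.Ioc (0:ℝ) 1, est u v) = f v

/-!
For `ρ = ρ_v > 0`, cut `(0, ρ]` at the points `ρ / (n + 1)` and give each cell the constant value
whose integral is the increase of the lower bound `f̲(·, v)` across that cell; the first cell
carries the gap between `f̲(ρ, v)` and the specified mass `∫_ρ^1 f̂(·, v)`. All increments are
nonnegative: `f̲(·, v)` is non-increasing, and every `z` consistent with the outcome at seed `ρ`
has `ρ_z = ρ` and the same specified mass, which is at most `f z`. They telescope to
`f v - ∫_ρ^1 f̂(·, v)` because `f̲(u, v) → f v` as `u → 0⁺`, which gives unbiasedness. At a seed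
`u ≤ ρ` the value only involves `ρ`, the specified mass and `f̲` at grid points `≥ u`, all of
which are determined by the outcome, so the extension is an estimator.
-/

section StepOfIncrements

variable {a b : ℕ → ℝ} {u : ℝ} {j : ℕ}

/-- For `a` antitone with limit `0` and `u ∈ (0, a 0]`, the unique `j` with
`u ∈ (a (j + 1), a j]`. -/
def intervalIndex (a : ℕ → ℝ) (u : ℝ) : ℕ := sInf {n | a (n + 1) < u}

def stepOfIncrements (a b : ℕ → ℝ) (u : ℝ) : ℝ :=
  (b (intervalIndex a u + 1) - b (intervalIndex a u)) /
    (a (intervalIndex a u) - a (intervalIndex a u + 1))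

lemma intervalIndex_eq (ha : Antitone a) (hu : u ∈ Ioc (a (j + 1)) (a j)) :
    intervalIndex a u = j := by
  have hmem : intervalIndex a u ∈ {n | a (n + 1) < u} := Nat.sInf_mem ⟨j, hu.1⟩
  refine le_antisymm (Nat.sInf_le hu.1) ?_
  by_contra! h
  exact (hu.2.trans (ha (Nat.succ_le_of_lt h))).not_gt hmem

lemma mem_Ioc_intervalIndex (ha0 : Tendsto a atTop (𝓝 0)) (hu : u ∈ Ioc 0 (a 0)) :
    u ∈ Ioc (a (intervalIndex a u + 1)) (a (intervalIndex a u)) := by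
  have hne : {n | a (n + 1) < u}.Nonempty :=
    ((tendsto_add_atTop_iff_nat 1).2 ha0 |>.eventually_lt_const hu.1).exists
  refine ⟨Nat.sInf_mem hne, ?_⟩
  rcases Nat.eq_zero_or_eq_succ_pred (intervalIndex a u) with h | h
  · rw [h]; exact hu.2
  · have hpred : (intervalIndex a u).pred ∉ {n | a (n + 1) < u} :=
      Nat.notMem_of_lt_sInf (Nat.pred_lt (by omega))
    rw [h]
    exact not_lt.1 hpred

lemma iUnion_Ioc_succ_eq (ha : Antitone a) (ha0 : Tendsto a atTop (𝓝 0)) :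
    ⋃ j, Ioc (a (j + 1)) (a j) = Ioc 0 (a 0) := by
  refine Subset.antisymm (iUnion_subset fun j u hu => ⟨?_, hu.2.trans (ha (Nat.zero_le j))⟩)
    fun u hu => mem_iUnion.2 ⟨_, mem_Ioc_intervalIndex ha0 hu⟩
  exact (ha.le_of_tendsto ha0 (j + 1)).trans_lt hu.1

lemma stepOfIncrements_nonneg (ha : Antitone a) (hb : Monotone b) (u : ℝ) :
    0 ≤ stepOfIncrements a b u :=
  div_nonneg (sub_nonneg.2 (hb (Nat.le_succ _))) (sub_nonneg.2 (ha (Nat.le_succ _)))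

lemma stepOfIncrements_eqOn (ha : Antitone a) (j : ℕ) :
    EqOn (stepOfIncrements a b) (fun _ => (b (j + 1) - b j) / (a j - a (j + 1)))
      (Ioc (a (j + 1)) (a j)) :=
  fun u hu => by rw [stepOfIncrements, intervalIndex_eq ha hu]

lemma integral_stepOfIncrements_Ioc (ha : StrictAnti a) (j : ℕ) :
    ∫ u in Ioc (a (j + 1)) (a j), stepOfIncrements a b u = b (j + 1) - b j := by
  have hlen : 0 < a j - a (j + 1) := sub_pos.2 (ha (Nat.lt_succ_self j))
  rw [setIntegral_congr_fun measurableSet_Ioc (stepOfIncrements_eqOn ha.antitone j),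
    setIntegral_const, measureReal_def, Real.volume_Ioc, ENNReal.toReal_ofReal hlen.le, smul_eq_mul,
    mul_div_cancel₀ _ hlen.ne']

lemma hasSum_sub_succ_of_tendsto {ℓ : ℝ} (hb : Monotone b) (hbℓ : Tendsto b atTop (𝓝 ℓ)) :
    HasSum (fun j => b (j + 1) - b j) (ℓ - b 0) := by
  refine (hasSum_iff_tendsto_nat_of_nonneg (fun j => sub_nonneg.2 (hb (Nat.le_succ j))) _).2 ?_
  simp_rw [Finset.sum_range_sub]
  exact hbℓ.sub_const _

lemma integrableOn_stepOfIncrements_and_integral {ℓ : ℝ} (ha : StrictAnti a)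
    (ha0 : Tendsto a atTop (𝓝 0)) (hb : Monotone b) (hbℓ : Tendsto b atTop (𝓝 ℓ)) :
    IntegrableOn (stepOfIncrements a b) (Ioc 0 (a 0)) ∧
      ∫ u in Ioc 0 (a 0), stepOfIncrements a b u = ℓ - b 0 := by
  have hsum := hasSum_sub_succ_of_tendsto hb hbℓ
  have hnorm (j : ℕ) :
      ∫ u in Ioc (a (j + 1)) (a j), ‖stepOfIncrements a b u‖ = b (j + 1) - b j := by
    simp_rw [Real.norm_of_nonneg (stepOfIncrements_nonneg ha.antitone hb _)]
    exact integral_stepOfIncrements_Ioc ha j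
  have hint : IntegrableOn (stepOfIncrements a b) (⋃ j, Ioc (a (j + 1)) (a j)) :=
    integrableOn_iUnion_of_summable_integral_norm
      (fun j => (integrableOn_const measure_Ioc_lt_top.ne).congr_fun
        (stepOfIncrements_eqOn ha.antitone j).symm measurableSet_Ioc)
      (by simpa only [hnorm] using hsum.summable)
  rw [← iUnion_Ioc_succ_eq ha.antitone ha0]
  refine ⟨hint, (hasSum_integral_iUnion (fun _ => measurableSet_Ioc)
    ha.antitone.pairwise_disjoint_on_Ioc_succ hint).unique ?_⟩
  simpa only [Order.succ_eq_add_one, integral_stepOfIncrements_Ioc ha] using hsum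

end StepOfIncrements

namespace CoordScheme

variable {r : ℕ} {C : CoordScheme r} {f : (Fin r → ℝ) → ℝ} {u x : ℝ} {v z : Fin r → ℝ}

lemma mem_Vstar_self (hv : v ∈ C.V) (u : ℝ) : v ∈ C.Vstar u v :=
  ⟨hv, fun _ => ⟨fun _ => rfl, id⟩⟩

lemma Vstar_subset_of_le (hu : 0 < u) (hux : u ≤ x) (hx : x ≤ 1) :
    C.Vstar u v ⊆ C.Vstar x v := by
  rintro z ⟨hzV, hz⟩
  have hτ (i : Fin r) : C.τ i u ≤ C.τ i x :=
    C.τ_mono i ⟨hu.le, hux.trans hx⟩ ⟨hu.le.trans hux, hx⟩ hux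
  refine ⟨hzV, fun i => ⟨fun hle => (hz i).1 ((hτ i).trans hle), fun hlt => ?_⟩⟩
  rcases le_or_gt (C.τ i u) (v i) with h | h
  · rw [(hz i).1 h]; exact hlt
  · exact ((hz i).2 h).trans_le (hτ i)

lemma Vstar_eq_of_mem (hz : z ∈ C.Vstar u v) : C.Vstar u z = C.Vstar u v := by
  obtain ⟨-, hz⟩ := hz
  ext w
  simp only [Vstar, mem_ofPred_eq]
  refine and_congr_right fun _ => forall_congr' fun i => ?_
  rcases le_or_gt (C.τ i u) (v i) with h | h
  · rw [(hz i).1 h]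
  · have hzi := (hz i).2 h
    simp only [not_le.2 h, not_le.2 hzi, hzi, h, false_implies, true_implies, true_and]

lemma lb_eq_of_mem_Vstar (hz : z ∈ C.Vstar u v) : C.lb f u z = C.lb f u v := by
  rw [lb, lb, Vstar_eq_of_mem hz]

lemma lb_antitoneOn (hf : ∀ v ∈ C.V, 0 ≤ f v) (hv : v ∈ C.V) :
    AntitoneOn (fun u => C.lb f u v) (Ioc 0 1) := fun u hu x hx hux =>
  csInf_le_csInf ⟨0, by rintro _ ⟨z, hz, rfl⟩; exact hf z hz.1⟩
    ⟨f v, mem_image_of_mem f (mem_Vstar_self hv u)⟩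
    (image_mono (Vstar_subset_of_le hu.1 hux hx.2))

end CoordScheme

def harmonicGrid (ρ : ℝ) (n : ℕ) : ℝ := ρ / (n + 1)

lemma harmonicGrid_zero (ρ : ℝ) : harmonicGrid ρ 0 = ρ := by simp [harmonicGrid]

lemma harmonicGrid_pos {ρ : ℝ} (hρ : 0 < ρ) (n : ℕ) : 0 < harmonicGrid ρ n := by
  unfold harmonicGrid; positivity

lemma harmonicGrid_strictAnti {ρ : ℝ} (hρ : 0 < ρ) : StrictAnti (harmonicGrid ρ) :=
  fun m n h => div_lt_div_of_pos_left hρ (by positivity) (by exact_mod_cast Nat.succ_lt_succ h)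

lemma harmonicGrid_mem_Ioc {ρ : ℝ} (hρ : ρ ∈ Ioc 0 1) (n : ℕ) : harmonicGrid ρ n ∈ Ioc 0 1 :=
  ⟨harmonicGrid_pos hρ.1 n, ((harmonicGrid_strictAnti hρ.1).antitone n.zero_le).trans
    ((harmonicGrid_zero ρ).le.trans hρ.2)⟩

lemma tendsto_harmonicGrid (ρ : ℝ) : Tendsto (harmonicGrid ρ) atTop (𝓝 0) := by
  have h := (tendsto_one_div_add_atTop_nhds_zero_nat (𝕜 := ℝ)).const_mul ρ
  rw [mul_zero] at h
  exact h.congr fun n => mul_one_div ρ _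

namespace PartialSpec

variable {r : ℕ} {C : CoordScheme r} {f : (Fin r → ℝ) → ℝ} (P : PartialSpec C f)
  {u : ℝ} {v z : Fin r → ℝ}

lemma bnd_eq_of_mem_Vstar (hu : u ∈ Ioc 0 1) (hv : v ∈ C.V) (hz : z ∈ C.Vstar u v)
    (hub : u ≤ P.bnd v) : P.bnd z = P.bnd v := by
  have hclosed {s : ℝ} (hus : u ≤ s) (hs : s ≤ 1) : P.bnd v < s ↔ P.bnd z < s :=
    P.closed s ⟨hu.1.trans_le hus, hs⟩ v hv z (CoordScheme.Vstar_subset_of_le hu.1 hus hs hz)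
  refine le_antisymm (not_lt.1 fun h => ?_) (not_lt.1 fun h => ?_)
  · exact lt_irrefl _ ((hclosed (hub.trans h.le) (P.bnd_mem z hz.1).2).1 h)
  · exact lt_irrefl _ ((hclosed hub (P.bnd_mem v hv).2).2 h)

def specIntegral (v : Fin r → ℝ) : ℝ := ∫ u in Ioc (P.bnd v) 1, P.est u v

lemma specIntegral_eq_of_mem_Vstar (hu : u ∈ Ioc 0 1) (hv : v ∈ C.V) (hz : z ∈ C.Vstar u v)
    (hub : u ≤ P.bnd v) : P.specIntegral z = P.specIntegral v := by
  rw [specIntegral, specIntegral, P.bnd_eq_of_mem_Vstar hu hv hz hub]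
  refine setIntegral_congr_fun measurableSet_Ioc fun x hx => ?_
  have hux : u ≤ x := hub.trans hx.1.le
  exact (P.consistent x ⟨hu.1.trans_le hux, hx.2⟩ v hv z
    (CoordScheme.Vstar_subset_of_le hu.1 hux hx.2 hz) hx.1).symm

lemma specIntegral_le_lb (hv : v ∈ C.V) (hρ : 0 < P.bnd v) :
    P.specIntegral v ≤ C.lb f (P.bnd v) v := by
  have hρ1 : P.bnd v ∈ Ioc 0 1 := ⟨hρ, (P.bnd_mem v hv).2⟩
  refine le_csInf ⟨f v, mem_image_of_mem f (CoordScheme.mem_Vstar_self hv _)⟩ ?_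
  rintro _ ⟨z, hz, rfl⟩
  have hbz := P.bnd_eq_of_mem_Vstar hρ1 hv hz le_rfl
  rw [← P.specIntegral_eq_of_mem_Vstar hρ1 hv hz le_rfl]
  exact P.int_le z hz.1 (hbz ▸ hρ)

def levels (v : Fin r → ℝ) : ℕ → ℝ
  | 0 => P.specIntegral v
  | n + 1 => C.lb f (harmonicGrid (P.bnd v) n) v

lemma levels_monotone (hf : ∀ v ∈ C.V, 0 ≤ f v) (hv : v ∈ C.V) (hρ : 0 < P.bnd v) :
    Monotone (P.levels v) := by
  have hgrid := harmonicGrid_mem_Ioc ⟨hρ, (P.bnd_mem v hv).2⟩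
  refine monotone_nat_of_le_succ fun n => ?_
  cases n with
  | zero => simpa [levels, harmonicGrid_zero] using P.specIntegral_le_lb hv hρ
  | succ n =>
    exact CoordScheme.lb_antitoneOn hf hv (hgrid (n + 1)) (hgrid n)
      ((harmonicGrid_strictAnti hρ).antitone n.le_succ)

lemma tendsto_levels (hρ : 0 < P.bnd v)
    (hlim : Tendsto (fun u => C.lb f u v) (𝓝[>] 0) (𝓝 (f v))) :
    Tendsto (P.levels v) atTop (𝓝 (f v)) := by
  refine (tendsto_add_atTop_iff_nat 1).1 (hlim.comp ?_)
  exact tendsto_nhdsWithin_iff.2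
    ⟨tendsto_harmonicGrid _, Eventually.of_forall (harmonicGrid_pos hρ)⟩

lemma levels_eq_of_mem_Vstar (hu : u ∈ Ioc 0 1) (hv : v ∈ C.V) (hz : z ∈ C.Vstar u v)
    (hub : u ≤ P.bnd v) {j : ℕ} (hj : u ≤ harmonicGrid (P.bnd v) j) {k : ℕ} (hk : k ≤ j + 1) :
    P.levels z k = P.levels v k := by
  have hρ : 0 < P.bnd v := hu.1.trans_le hub
  cases k with
  | zero => exact P.specIntegral_eq_of_mem_Vstar hu hv hz hub
  | succ k =>
    have hk : u ≤ harmonicGrid (P.bnd v) k :=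
      hj.trans ((harmonicGrid_strictAnti hρ).antitone (by omega))
    simp only [levels, P.bnd_eq_of_mem_Vstar hu hv hz hub]
    exact CoordScheme.lb_eq_of_mem_Vstar (CoordScheme.Vstar_subset_of_le hu.1 hk
      (harmonicGrid_mem_Ioc ⟨hρ, (P.bnd_mem v hv).2⟩ k).2 hz)

def extension (u : ℝ) (v : Fin r → ℝ) : ℝ :=
  if P.bnd v < u then P.est u v else stepOfIncrements (harmonicGrid (P.bnd v)) (P.levels v) u

lemma extension_of_bnd_lt (h : P.bnd v < u) : P.extension u v = P.est u v := if_pos h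

lemma extension_of_le_bnd (h : u ≤ P.bnd v) :
    P.extension u v = stepOfIncrements (harmonicGrid (P.bnd v)) (P.levels v) u :=
  if_neg (not_lt.2 h)

lemma extension_eq_of_mem_Vstar (hu : u ∈ Ioc 0 1) (hv : v ∈ C.V) (hz : z ∈ C.Vstar u v) :
    P.extension u v = P.extension u z := by
  rcases lt_or_ge (P.bnd v) u with h | h
  · rw [P.extension_of_bnd_lt h, P.extension_of_bnd_lt ((P.closed u hu v hv z hz).1 h)]
    exact P.consistent u hu v hv z hz h
  have hbz := P.bnd_eq_of_mem_Vstar hu hv hz h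
  have hj := (mem_Ioc_intervalIndex (tendsto_harmonicGrid (P.bnd v))
    (show u ∈ Ioc 0 (harmonicGrid (P.bnd v) 0) from harmonicGrid_zero _ ▸ ⟨hu.1, h⟩)).2
  rw [P.extension_of_le_bnd h, P.extension_of_le_bnd (hbz ▸ h), hbz, stepOfIncrements,
    stepOfIncrements, P.levels_eq_of_mem_Vstar hu hv hz h hj le_rfl,
    P.levels_eq_of_mem_Vstar hu hv hz h hj (Nat.le_succ _)]

lemma extension_nonneg (hf : ∀ v ∈ C.V, 0 ≤ f v) (hu : u ∈ Ioc 0 1) (hv : v ∈ C.V) :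
    0 ≤ P.extension u v := by
  rcases lt_or_ge (P.bnd v) u with h | h
  · rw [P.extension_of_bnd_lt h]; exact P.nonneg u hu v hv h
  have hρ : 0 < P.bnd v := hu.1.trans_le h
  rw [P.extension_of_le_bnd h]
  exact stepOfIncrements_nonneg (harmonicGrid_strictAnti hρ).antitone
    (P.levels_monotone hf hv hρ) u

lemma integrableOn_extension_and_integral (hf : ∀ v ∈ C.V, 0 ≤ f v) (hv : v ∈ C.V)
    (hlim : Tendsto (fun u => C.lb f u v) (𝓝[>] 0) (𝓝 (f v))) :
    IntegrableOn (fun u => P.extension u v) (Ioc 0 1) ∧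
      ∫ u in Ioc 0 1, P.extension u v = f v := by
  have hest : EqOn (fun u => P.extension u v) (fun u => P.est u v) (Ioc (P.bnd v) 1) :=
    fun u hu => P.extension_of_bnd_lt hu.1
  rcases (P.bnd_mem v hv).1.eq_or_lt with hρ | hρ
  · have hint := P.integrable v hv
    rw [← hρ] at hest hint
    exact ⟨hint.congr_fun hest.symm measurableSet_Ioc,
      (setIntegral_congr_fun measurableSet_Ioc hest).trans (P.int_eq v hv hρ.symm)⟩
  have hstep : EqOn (fun u => P.extension u v)
      (stepOfIncrements (harmonicGrid (P.bnd v)) (P.levels v)) (Ioc 0 (P.bnd v)) :=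
    fun u hu => P.extension_of_le_bnd hu.2
  obtain ⟨hint, hval⟩ := harmonicGrid_zero (P.bnd v) ▸
    integrableOn_stepOfIncrements_and_integral (harmonicGrid_strictAnti hρ)
      (tendsto_harmonicGrid _) (P.levels_monotone hf hv hρ) (P.tendsto_levels hρ hlim)
  have hint₁ := hint.congr_fun hstep.symm measurableSet_Ioc
  have hint₂ := (P.integrable v hv).congr_fun hest.symm measurableSet_Ioc
  rw [← Ioc_union_Ioc_eq_Ioc hρ.le (P.bnd_mem v hv).2]
  refine ⟨hint₁.union hint₂, ?_⟩
  rw [setIntegral_union (Ioc_disjoint_Ioc_of_le le_rfl) measurableSet_Ioc hint₁ hint₂,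
    setIntegral_congr_fun measurableSet_Ioc hstep, hval,
    setIntegral_congr_fun measurableSet_Ioc hest]
  exact sub_add_cancel _ _

end PartialSpec

/-- if `lim_{u→0⁺} f̲⁽ᵛ⁾(u) = f(v)` for all `v ∈ V`, then every
partially specified estimator extends to a nonnegative unbiased estimator of `f`
agreeing with it wherever it is specified. -/
theorem stmt18 {r : ℕ} (C : CoordScheme r) (f : (Fin r → ℝ) → ℝ)
    (hf : ∀ v ∈ C.V, 0 ≤ f v)
    (hlim : ∀ v ∈ C.V,
      Filter.Tendsto (fun u => C.lb f u v) (𝓝[>] (0:ℝ)) (𝓝 (f v)))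
    (P : PartialSpec C f) :
    ∃ g : ℝ → (Fin r → ℝ) → ℝ,
      C.IsEstimator g ∧ C.Nonneg g ∧ C.Unbiased f g ∧
      ∀ v ∈ C.V, ∀ u ∈ Set.Ioc (0:ℝ) 1, P.bnd v < u → g u v = P.est u v :=
  ⟨P.extension,
    ⟨fun v hv => (P.integrableOn_extension_and_integral hf hv (hlim v hv)).1,
      fun _ hu _ hv _ hz => P.extension_eq_of_mem_Vstar hu hv hz⟩,
    fun _ hu _ hv => P.extension_nonneg hf hu hv,
    fun v hv => (P.integrableOn_extension_and_integral hf hv (hlim v hv)).2,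
    fun _ _ _ _ h => P.extension_of_bnd_lt h⟩
end
end
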